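/- arXiv:2111.10185 — 3 statements merged into one kernel-verified Lean document; each statement's English description precedes it below -/
import Mathlib

section
/- For the twisted surface T(x,y) = (y·cos(x/2)·cos x, y·cos(x/2)·sin x, y·sin(x/2)) (profile curve α(y) = (y,0,0), a = 0, b = 1/2), the first fundamental form coefficients at (x,y) with y > 0 are g₁₁ = y²·(cos²(x/2) + 1/4), g₁₂ = 0, and g₂₂ = 1; consequently a curve making constant angle φ with meridians satisfies dy/dx = (y/2)·√(2cos x + 3)·tan φ. -/
/-- For T(x,y) = (y·cos(x/2)·cos x, y·cos(x/2)·sin x, y·sin(x/2)) with y > 0: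
g₁₁ = y²(cos²(x/2)+1/4), g₁₂ = 0, g₂₂ = 1, and the loxodrome ODE right-hand side
(g₁₁/√(g₁₁g₂₂ − g₁₂²))·tan φ equals (y/2)·√(2cos x + 3)·tan φ. -/
theorem twisted_example1_coeffs (x y φ : ℝ) (hy : y > 0) (hφ : φ ∈ Set.Ioo 0 (Real.pi / 2)) :
    (deriv (fun s => y * Real.cos (s / 2) * Real.cos s) x) ^ 2
      + (deriv (fun s => y * Real.cos (s / 2) * Real.sin s) x) ^ 2
      + (deriv (fun s => y * Real.sin (s / 2)) x) ^ 2
      = y ^ 2 * (Real.cos (x / 2) ^ 2 + 1 / 4)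
    ∧ (deriv (fun s => y * Real.cos (s / 2) * Real.cos s) x) *
        (deriv (fun t => t * Real.cos (x / 2) * Real.cos x) y)
      + (deriv (fun s => y * Real.cos (s / 2) * Real.sin s) x) *
        (deriv (fun t => t * Real.cos (x / 2) * Real.sin x) y)
      + (deriv (fun s => y * Real.sin (s / 2)) x) *
        (deriv (fun t => t * Real.sin (x / 2)) y)
      = 0
    ∧ (deriv (fun t => t * Real.cos (x / 2) * Real.cos x) y) ^ 2
      + (deriv (fun t => t * Real.cos (x / 2) * Real.sin x) y) ^ 2
      + (deriv (fun t => t * Real.sin (x / 2)) y) ^ 2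
      = 1
    ∧ (y ^ 2 * (Real.cos (x / 2) ^ 2 + 1 / 4))
        / Real.sqrt ((y ^ 2 * (Real.cos (x / 2) ^ 2 + 1 / 4)) * 1 - 0 ^ 2) * Real.tan φ
      = y / 2 * Real.sqrt (2 * Real.cos x + 3) * Real.tan φ := by
  have hhalf : HasDerivAt (fun s : ℝ => s / 2) (1 / 2) x := by
    simpa using (hasDerivAt_id x).div_const 2
  have hc : HasDerivAt (fun s : ℝ => Real.cos (s / 2)) (-Real.sin (x / 2) * (1 / 2)) x :=
    hhalf.cos
  have hs : HasDerivAt (fun s : ℝ => Real.sin (s / 2)) (Real.cos (x / 2) * (1 / 2)) x :=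
    hhalf.sin
  have h1 : deriv (fun s => y * Real.cos (s / 2) * Real.cos s) x
      = y * (-Real.sin (x / 2) * (1 / 2)) * Real.cos x
        + y * Real.cos (x / 2) * (-Real.sin x) := by
    have := ((hc.const_mul y).mul (Real.hasDerivAt_cos x)).deriv
    exact this
  have h2 : deriv (fun s => y * Real.cos (s / 2) * Real.sin s) x
      = y * (-Real.sin (x / 2) * (1 / 2)) * Real.sin x
        + y * Real.cos (x / 2) * Real.cos x := by
    have := ((hc.const_mul y).mul (Real.hasDerivAt_sin x)).deriv
    exact this
  have h3 : deriv (fun s => y * Real.sin (s / 2)) x = y * (Real.cos (x / 2) * (1 / 2)) :=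
    (hs.const_mul y).deriv
  have h4 : deriv (fun t : ℝ => t * Real.cos (x / 2) * Real.cos x) y
      = Real.cos (x / 2) * Real.cos x := by
    have := (((hasDerivAt_id y).mul_const (Real.cos (x / 2))).mul_const (Real.cos x)).deriv
    simpa using this
  have h5 : deriv (fun t : ℝ => t * Real.cos (x / 2) * Real.sin x) y
      = Real.cos (x / 2) * Real.sin x := by
    have := (((hasDerivAt_id y).mul_const (Real.cos (x / 2))).mul_const (Real.sin x)).deriv
    simpa using this
  have h6 : deriv (fun t : ℝ => t * Real.sin (x / 2)) y = Real.sin (x / 2) := by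
    have := ((hasDerivAt_id y).mul_const (Real.sin (x / 2))).deriv
    simpa using this
  have p1 : Real.sin x ^ 2 + Real.cos x ^ 2 = 1 := Real.sin_sq_add_cos_sq x
  have p2 : Real.sin (x / 2) ^ 2 + Real.cos (x / 2) ^ 2 = 1 := Real.sin_sq_add_cos_sq (x / 2)
  refine ⟨?_, ?_, ?_, ?_⟩
  · rw [h1, h2, h3]
    linear_combination (y ^ 2 / 4) * p2 + (y ^ 2 * Real.cos (x / 2) ^ 2 + y ^ 2 * Real.sin (x / 2) ^ 2 / 4) * p1
  · rw [h1, h2, h3, h4, h5, h6]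
    linear_combination (-(y * Real.sin (x / 2) * Real.cos (x / 2) / 2)) * p1
  · rw [h4, h5, h6]
    linear_combination Real.cos (x / 2) ^ 2 * p1 + p2
  · have hk : Real.cos (x / 2) ^ 2 + 1 / 4 = (2 * Real.cos x + 3) / 4 := by
      have h := Real.cos_sq (x / 2)
      rw [show 2 * (x / 2) = x by ring] at h
      linarith
    have hkpos : (0:ℝ) < Real.cos (x / 2) ^ 2 + 1 / 4 := by positivity
    have hsq : Real.sqrt (y ^ 2 * (Real.cos (x / 2) ^ 2 + 1 / 4) * 1 - 0 ^ 2)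
        = y * Real.sqrt (Real.cos (x / 2) ^ 2 + 1 / 4) := by
      rw [show y ^ 2 * (Real.cos (x / 2) ^ 2 + 1 / 4) * 1 - 0 ^ 2
          = y ^ 2 * (Real.cos (x / 2) ^ 2 + 1 / 4) by ring,
        Real.sqrt_mul (by positivity), Real.sqrt_sq hy.le]
    rw [hsq]
    have hspos : (0:ℝ) < Real.sqrt (Real.cos (x / 2) ^ 2 + 1 / 4) := Real.sqrt_pos.mpr hkpos
    have key : y ^ 2 * (Real.cos (x / 2) ^ 2 + 1 / 4)
        / (y * Real.sqrt (Real.cos (x / 2) ^ 2 + 1 / 4))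
        = y * Real.sqrt (Real.cos (x / 2) ^ 2 + 1 / 4) := by
      rw [div_eq_iff (by positivity)]
      have h := Real.sq_sqrt hkpos.le
      linear_combination -y ^ 2 * h
    rw [key, hk]
    have hnn : (0:ℝ) ≤ 2 * Real.cos x + 3 := by nlinarith [Real.neg_one_le_cos x]
    rw [Real.sqrt_div hnn, show Real.sqrt 4 = 2 by
      rw [show (4:ℝ) = 2 ^ 2 by norm_num, Real.sqrt_sq (by norm_num : (0:ℝ) ≤ 2)]]
    ring
end

section
/- For the twisted surface T with profile curve α(y) = (f(y), 0, g(y)), the quantity g₁₁·g₂₂ − g₁₂² equals (f'² + g'²)·[a² − 2ag·sin(bx) + 2f·cos(bx)·(a − g·sin(bx)) + (1/2)((1 + 2b² + cos(2bx))f² + (1 + 2b² − cos(2bx))g²)] − b²(f·g' − f'·g)², and this expression is the determinant of the first fundamental form of T. -/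
/-- Determinant of the first fundamental form of the twisted surface:
g₁₁·g₂₂ − g₁₂² = (f'²+g'²)·[a² − 2ag·sin(bx) + 2f·cos(bx)(a − g·sin(bx))
+ (1/2)((1+2b²+cos 2bx)f² + (1+2b²−cos 2bx)g²)] − b²(fg' − f'g)². -/
theorem twisted_surface_det (a b : ℝ) (f g : ℝ → ℝ)
    (hf : Differentiable ℝ f) (hg : Differentiable ℝ g) (x y : ℝ) :
    ((deriv (fun s => (a + f y * Real.cos (b * s) - g y * Real.sin (b * s)) * Real.cos s) x) ^ 2
      + (deriv (fun s => (a + f y * Real.cos (b * s) - g y * Real.sin (b * s)) * Real.sin s) x) ^ 2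
      + (deriv (fun s => f y * Real.sin (b * s) + g y * Real.cos (b * s)) x) ^ 2) *
    ((deriv (fun t => (a + f t * Real.cos (b * x) - g t * Real.sin (b * x)) * Real.cos x) y) ^ 2
      + (deriv (fun t => (a + f t * Real.cos (b * x) - g t * Real.sin (b * x)) * Real.sin x) y) ^ 2
      + (deriv (fun t => f t * Real.sin (b * x) + g t * Real.cos (b * x)) y) ^ 2)
    - ((deriv (fun s => (a + f y * Real.cos (b * s) - g y * Real.sin (b * s)) * Real.cos s) x) *
        (deriv (fun t => (a + f t * Real.cos (b * x) - g t * Real.sin (b * x)) * Real.cos x) y)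
      + (deriv (fun s => (a + f y * Real.cos (b * s) - g y * Real.sin (b * s)) * Real.sin s) x) *
        (deriv (fun t => (a + f t * Real.cos (b * x) - g t * Real.sin (b * x)) * Real.sin x) y)
      + (deriv (fun s => f y * Real.sin (b * s) + g y * Real.cos (b * s)) x) *
        (deriv (fun t => f t * Real.sin (b * x) + g t * Real.cos (b * x)) y)) ^ 2
    = ((deriv f y) ^ 2 + (deriv g y) ^ 2) *
        (a ^ 2 - 2 * a * g y * Real.sin (b * x)
          + 2 * f y * Real.cos (b * x) * (a - g y * Real.sin (b * x))
          + (1 / 2) * ((1 + 2 * b ^ 2 + Real.cos (2 * b * x)) * (f y) ^ 2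
            + (1 + 2 * b ^ 2 - Real.cos (2 * b * x)) * (g y) ^ 2))
      - b ^ 2 * (f y * deriv g y - deriv f y * g y) ^ 2 := by
  have hbx : ∀ u : ℝ, HasDerivAt (fun s : ℝ => b * s) b u := fun u => by
    simpa using (hasDerivAt_id u).const_mul b
  have hd1 : deriv (fun s => (a + f y * Real.cos (b * s) - g y * Real.sin (b * s)) * Real.cos s) x
      = (-(f y * (Real.sin (b*x) * b)) - g y * (Real.cos (b*x) * b)) * Real.cos x
        - (a + f y * Real.cos (b*x) - g y * Real.sin (b*x)) * Real.sin x := by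
    have h := (((((Real.hasDerivAt_cos (b*x)).comp x (hbx x)).const_mul (f y)).const_add a).sub
        (((Real.hasDerivAt_sin (b*x)).comp x (hbx x)).const_mul (g y))).mul (Real.hasDerivAt_cos x)
    simp only [Function.comp_def, Pi.sub_def, Pi.mul_def, Pi.add_def] at h
    rw [h.deriv]; ring
  have hd2 : deriv (fun s => (a + f y * Real.cos (b * s) - g y * Real.sin (b * s)) * Real.sin s) x
      = (-(f y * (Real.sin (b*x) * b)) - g y * (Real.cos (b*x) * b)) * Real.sin x
        + (a + f y * Real.cos (b*x) - g y * Real.sin (b*x)) * Real.cos x := by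
    have h := (((((Real.hasDerivAt_cos (b*x)).comp x (hbx x)).const_mul (f y)).const_add a).sub
        (((Real.hasDerivAt_sin (b*x)).comp x (hbx x)).const_mul (g y))).mul (Real.hasDerivAt_sin x)
    simp only [Function.comp_def, Pi.sub_def, Pi.mul_def, Pi.add_def] at h
    rw [h.deriv]; ring
  have hd3 : deriv (fun s => f y * Real.sin (b * s) + g y * Real.cos (b * s)) x
      = f y * (Real.cos (b*x) * b) + g y * (-Real.sin (b*x) * b) := by
    have h := ((((Real.hasDerivAt_sin (b*x)).comp x (hbx x)).const_mul (f y))).add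
        (((Real.hasDerivAt_cos (b*x)).comp x (hbx x)).const_mul (g y))
    simp only [Function.comp_def, Pi.sub_def, Pi.mul_def, Pi.add_def] at h
    rw [h.deriv]
  have he1 : deriv (fun t => (a + f t * Real.cos (b * x) - g t * Real.sin (b * x)) * Real.cos x) y
      = (deriv f y * Real.cos (b*x) - deriv g y * Real.sin (b*x)) * Real.cos x := by
    have h : HasDerivAt (fun t => (a + f t * Real.cos (b * x) - g t * Real.sin (b * x)) * Real.cos x)
        ((deriv f y * Real.cos (b*x) - deriv g y * Real.sin (b*x)) * Real.cos x) y :=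
      (((((hf y).hasDerivAt.mul_const (Real.cos (b*x))).const_add a).sub
        ((hg y).hasDerivAt.mul_const (Real.sin (b*x))))).mul_const (Real.cos x)
    rw [h.deriv]
  have he2 : deriv (fun t => (a + f t * Real.cos (b * x) - g t * Real.sin (b * x)) * Real.sin x) y
      = (deriv f y * Real.cos (b*x) - deriv g y * Real.sin (b*x)) * Real.sin x := by
    have h : HasDerivAt (fun t => (a + f t * Real.cos (b * x) - g t * Real.sin (b * x)) * Real.sin x)
        ((deriv f y * Real.cos (b*x) - deriv g y * Real.sin (b*x)) * Real.sin x) y :=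
      (((((hf y).hasDerivAt.mul_const (Real.cos (b*x))).const_add a).sub
        ((hg y).hasDerivAt.mul_const (Real.sin (b*x))))).mul_const (Real.sin x)
    rw [h.deriv]
  have he3 : deriv (fun t => f t * Real.sin (b * x) + g t * Real.cos (b * x)) y
      = deriv f y * Real.sin (b*x) + deriv g y * Real.cos (b*x) := by
    have h : HasDerivAt (fun t => f t * Real.sin (b * x) + g t * Real.cos (b * x))
        (deriv f y * Real.sin (b*x) + deriv g y * Real.cos (b*x)) y :=
      ((hf y).hasDerivAt.mul_const (Real.sin (b*x))).add
        ((hg y).hasDerivAt.mul_const (Real.cos (b*x)))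
    rw [h.deriv]
  have h2 : Real.cos (2 * b * x) = 2 * Real.cos (b*x) ^ 2 - 1 := by
    rw [show (2:ℝ) * b * x = 2 * (b * x) by ring, Real.cos_two_mul]
  have hCS : Real.cos x ^ 2 + Real.sin x ^ 2 = 1 := Real.cos_sq_add_sin_sq x
  have hcs : Real.cos (b*x) ^ 2 + Real.sin (b*x) ^ 2 = 1 := Real.cos_sq_add_sin_sq (b*x)
  rw [hd1, hd2, hd3, he1, he2, he3, h2]
  linear_combination ((1)*((g y))^2*((deriv g y))^2*(Real.sin (b*x))^4 + (1)*((g y))^2*((deriv g y))^2*(Real.sin (b*x))^4*(Real.sin x)^2 + (1)*((g y))^2*((deriv g y))^2*(Real.sin (b*x))^4*(Real.cos x)^2 + (1)*((g y))^2*((deriv g y))^2*(Real.cos (b*x))^2*(Real.sin (b*x))^2 + (-2)*((g y))^2*((deriv f y))*((deriv g y))*(Real.cos (b*x))*(Real.sin (b*x))^3*(Real.sin x)^2 + (-2)*((g y))^2*((deriv f y))*((deriv g y))*(Real.cos (b*x))*(Real.sin (b*x))^3*(Real.cos x)^2 + (1)*((g y))^2*((deriv f y))^2*(Real.sin (b*x))^4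 + (1)*((g y))^2*((deriv f y))^2*(Real.cos (b*x))^2*(Real.sin (b*x))^2 + (1)*((g y))^2*((deriv f y))^2*(Real.cos (b*x))^2*(Real.sin (b*x))^2*(Real.sin x)^2 + (1)*((g y))^2*((deriv f y))^2*(Real.cos (b*x))^2*(Real.sin (b*x))^2*(Real.cos x)^2 + (-2)*((f y))*((g y))*((deriv g y))^2*(Real.cos (b*x))*(Real.sin (b*x))^3 + (-2)*((f y))*((g y))*((deriv g y))^2*(Real.cos (b*x))*(Real.sin (b*x))^3*(Real.sin x)^2 + (-2)*((f y))*((g y))*((deriv g y))^2*(Real.cos (b*x))*(Real.sin (b*x))^3*(Real.cos x)^2 + (-2)*((f y))*((g y))*((deriv g y))^2*(Real.cos (b*x))^3*(Real.sin (b*x)) + (4)*((f y))*((g y))*((deriv f y))*((deriv g y))*(Real.cos (b*x))^2*(Real.sin (b*x))^2*(Real.sin x)^2 + (4)*((f y))*((g y))*((deriv f y))*((deriv g y))*(Real.cos (b*x))^2*(Real.sin (b*x))^2*(Real.cos x)^2 + (-2)*((f y))*((g y))*((deriv f y))^2*(Real.cos (b*x))*(Real.sin (b*x))^3 + (-2)*((f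 y))*((g y))*((deriv f y))^2*(Real.cos (b*x))^3*(Real.sin (b*x)) + (-2)*((f y))*((g y))*((deriv f y))^2*(Real.cos (b*x))^3*(Real.sin (b*x))*(Real.sin x)^2 + (-2)*((f y))*((g y))*((deriv f y))^2*(Real.cos (b*x))^3*(Real.sin (b*x))*(Real.cos x)^2 + (1)*((f y))^2*((deriv g y))^2*(Real.cos (b*x))^2*(Real.sin (b*x))^2 + (1)*((f y))^2*((deriv g y))^2*(Real.cos (b*x))^2*(Real.sin (b*x))^2*(Real.sin x)^2 + (1)*((f y))^2*((deriv g y))^2*(Real.cos (b*x))^2*(Real.sin (b*x))^2*(Real.cos x)^2 + (1)*((f y))^2*((deriv g y))^2*(Real.cos (b*x))^4 + (-2)*((f y))^2*((deriv f y))*((deriv g y))*(Real.cos (b*x))^3*(Real.sin (b*x))*(Real.sin x)^2 + (-2)*((f y))^2*((deriv f y))*((deriv g y))*(Real.cos (b*x))^3*(Real.sin (b*x))*(Real.cos x)^2 + (1)*((f y))^2*((deriv f y))^2*(Real.cos (b*x))^2*(Real.sin (b*x))^2 + (1)*((f y))^2*((deriv f y))^2*(Real.cos (b*x))^4 + (1)*((f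 y))^2*((deriv f y))^2*(Real.cos (b*x))^4*(Real.sin x)^2 + (1)*((f y))^2*((deriv f y))^2*(Real.cos (b*x))^4*(Real.cos x)^2 + (1)*(b)^2*((g y))^2*((deriv g y))^2*(Real.sin (b*x))^4 + (2)*(b)^2*((g y))^2*((deriv g y))^2*(Real.cos (b*x))^2*(Real.sin (b*x))^2 + (1)*(b)^2*((g y))^2*((deriv g y))^2*(Real.cos (b*x))^4 + (2)*(b)^2*((f y))*((g y))*((deriv f y))*((deriv g y))*(Real.sin (b*x))^4 + (4)*(b)^2*((f y))*((g y))*((deriv f y))*((deriv g y))*(Real.cos (b*x))^2*(Real.sin (b*x))^2 + (2)*(b)^2*((f y))*((g y))*((deriv f y))*((deriv g y))*(Real.cos (b*x))^4 + (1)*(b)^2*((f y))^2*((deriv f y))^2*(Real.sin (b*x))^4 + (2)*(b)^2*((f y))^2*((deriv f y))^2*(Real.cos (b*x))^2*(Real.sin (b*x))^2 + (1)*(b)^2*((f y))^2*((deriv f y))^2*(Real.cos (b*x))^4 + (-2)*(a)*((g y))*((deriv g y))^2*(Real.sin (b*x))^3 + (-2)*(a)*((g y))*((deriv g y))^2*(Real.sin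 (b*x))^3*(Real.sin x)^2 + (-2)*(a)*((g y))*((deriv g y))^2*(Real.sin (b*x))^3*(Real.cos x)^2 + (-2)*(a)*((g y))*((deriv g y))^2*(Real.cos (b*x))^2*(Real.sin (b*x)) + (4)*(a)*((g y))*((deriv f y))*((deriv g y))*(Real.cos (b*x))*(Real.sin (b*x))^2*(Real.sin x)^2 + (4)*(a)*((g y))*((deriv f y))*((deriv g y))*(Real.cos (b*x))*(Real.sin (b*x))^2*(Real.cos x)^2 + (-2)*(a)*((g y))*((deriv f y))^2*(Real.sin (b*x))^3 + (-2)*(a)*((g y))*((deriv f y))^2*(Real.cos (b*x))^2*(Real.sin (b*x)) + (-2)*(a)*((g y))*((deriv f y))^2*(Real.cos (b*x))^2*(Real.sin (b*x))*(Real.sin x)^2 + (-2)*(a)*((g y))*((deriv f y))^2*(Real.cos (b*x))^2*(Real.sin (b*x))*(Real.cos x)^2 + (2)*(a)*((f y))*((deriv g y))^2*(Real.cos (b*x))*(Real.sin (b*x))^2 + (2)*(a)*((f y))*((deriv g y))^2*(Real.cos (b*x))*(Real.sin (b*x))^2*(Real.sin x)^2 + (2)*(a)*((f y))*((deriv g y))^2*(Real.cos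 (b*x))*(Real.sin (b*x))^2*(Real.cos x)^2 + (2)*(a)*((f y))*((deriv g y))^2*(Real.cos (b*x))^3 + (-4)*(a)*((f y))*((deriv f y))*((deriv g y))*(Real.cos (b*x))^2*(Real.sin (b*x))*(Real.sin x)^2 + (-4)*(a)*((f y))*((deriv f y))*((deriv g y))*(Real.cos (b*x))^2*(Real.sin (b*x))*(Real.cos x)^2 + (2)*(a)*((f y))*((deriv f y))^2*(Real.cos (b*x))*(Real.sin (b*x))^2 + (2)*(a)*((f y))*((deriv f y))^2*(Real.cos (b*x))^3 + (2)*(a)*((f y))*((deriv f y))^2*(Real.cos (b*x))^3*(Real.sin x)^2 + (2)*(a)*((f y))*((deriv f y))^2*(Real.cos (b*x))^3*(Real.cos x)^2 + (1)*(a)^2*((deriv g y))^2*(Real.sin (b*x))^2 + (1)*(a)^2*((deriv g y))^2*(Real.sin (b*x))^2*(Real.sin x)^2 + (1)*(a)^2*((deriv g y))^2*(Real.sin (b*x))^2*(Real.cos x)^2 + (1)*(a)^2*((deriv g y))^2*(Real.cos (b*x))^2 + (-2)*(a)^2*((deriv f y))*((deriv g y))*(Real.cos (b*x))*(Real.sin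 (b*x))*(Real.sin x)^2 + (-2)*(a)^2*((deriv f y))*((deriv g y))*(Real.cos (b*x))*(Real.sin (b*x))*(Real.cos x)^2 + (1)*(a)^2*((deriv f y))^2*(Real.sin (b*x))^2 + (1)*(a)^2*((deriv f y))^2*(Real.cos (b*x))^2 + (1)*(a)^2*((deriv f y))^2*(Real.cos (b*x))^2*(Real.sin x)^2 + (1)*(a)^2*((deriv f y))^2*(Real.cos (b*x))^2*(Real.cos x)^2) * hCS + ((1)*((g y))^2*((deriv g y))^2 + (1)*((g y))^2*((deriv g y))^2*(Real.sin (b*x))^2 + (1)*((g y))^2*((deriv f y))^2 + (1)*((g y))^2*((deriv f y))^2*(Real.sin (b*x))^2 + (-2)*((f y))*((g y))*((deriv g y))^2*(Real.cos (b*x))*(Real.sin (b*x)) + (-2)*((f y))*((g y))*((deriv f y))^2*(Real.cos (b*x))*(Real.sin (b*x)) + (1)*((f y))^2*((deriv g y))^2*(Real.cos (b*x))^2 + (1)*((f y))^2*((deriv f y))^2*(Real.cos (b*x))^2 + (1)*(b)^2*((g y))^2*((deriv g y))^2 + (1)*(b)^2*((g y))^2*((deriv g y))^2*(Real.sin (b*x))^2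 + (1)*(b)^2*((g y))^2*((deriv g y))^2*(Real.cos (b*x))^2 + (2)*(b)^2*((f y))*((g y))*((deriv f y))*((deriv g y)) + (2)*(b)^2*((f y))*((g y))*((deriv f y))*((deriv g y))*(Real.sin (b*x))^2 + (2)*(b)^2*((f y))*((g y))*((deriv f y))*((deriv g y))*(Real.cos (b*x))^2 + (1)*(b)^2*((f y))^2*((deriv f y))^2 + (1)*(b)^2*((f y))^2*((deriv f y))^2*(Real.sin (b*x))^2 + (1)*(b)^2*((f y))^2*((deriv f y))^2*(Real.cos (b*x))^2 + (-2)*(a)*((g y))*((deriv g y))^2*(Real.sin (b*x)) + (-2)*(a)*((g y))*((deriv f y))^2*(Real.sin (b*x)) + (2)*(a)*((f y))*((deriv g y))^2*(Real.cos (b*x)) + (2)*(a)*((f y))*((deriv f y))^2*(Real.cos (b*x)) + (1)*(a)^2*((deriv g y))^2 + (1)*(a)^2*((deriv f y))^2) * hcs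
end

section
/- If the profile curve satisfies f·g' − f'·g = 0 identically (e.g., α(y) = (y, 0, 0)), then the twisted surface T has g₁₂ = 0 everywhere, i.e., the coordinate curves (meridians and parallels) are everywhere orthogonal. -/
/-- If fg' − f'g ≡ 0, then the twisted surface has g₁₂ = 0 everywhere. -/
theorem twisted_surface_orthogonal (a b : ℝ) (f g : ℝ → ℝ)
    (hf : Differentiable ℝ f) (hg : Differentiable ℝ g)
    (h : ∀ y, f y * deriv g y - deriv f y * g y = 0) (x y : ℝ) :
    (deriv (fun s => (a + f y * Real.cos (b * s) - g y * Real.sin (b * s)) * Real.cos s) x) *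
      (deriv (fun t => (a + f t * Real.cos (b * x) - g t * Real.sin (b * x)) * Real.cos x) y)
    + (deriv (fun s => (a + f y * Real.cos (b * s) - g y * Real.sin (b * s)) * Real.sin s) x) *
      (deriv (fun t => (a + f t * Real.cos (b * x) - g t * Real.sin (b * x)) * Real.sin x) y)
    + (deriv (fun s => f y * Real.sin (b * s) + g y * Real.cos (b * s)) x) *
      (deriv (fun t => f t * Real.sin (b * x) + g t * Real.cos (b * x)) y)
    = 0 := by
  have hc : HasDerivAt (fun s : ℝ => Real.cos (b * s)) (-Real.sin (b * x) * (b * 1)) x :=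
    (Real.hasDerivAt_cos (b * x)).comp x ((hasDerivAt_id x).const_mul b)
  have hs : HasDerivAt (fun s : ℝ => Real.sin (b * s)) (Real.cos (b * x) * (b * 1)) x :=
    (Real.hasDerivAt_sin (b * x)).comp x ((hasDerivAt_id x).const_mul b)
  have hA : HasDerivAt (fun s : ℝ => a + f y * Real.cos (b * s) - g y * Real.sin (b * s))
      (0 + f y * (-Real.sin (b * x) * (b * 1)) - g y * (Real.cos (b * x) * (b * 1))) x :=
    ((hasDerivAt_const x a).add (hc.const_mul (f y))).sub (hs.const_mul (g y))
  have h1 := (hA.mul (Real.hasDerivAt_cos x)).deriv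
  have h2 := (hA.mul (Real.hasDerivAt_sin x)).deriv
  have h3 := ((hs.const_mul (f y)).add (hc.const_mul (g y))).deriv
  have hB : HasDerivAt (fun t : ℝ => a + f t * Real.cos (b * x) - g t * Real.sin (b * x))
      (0 + deriv f y * Real.cos (b * x) - deriv g y * Real.sin (b * x)) y :=
    ((hasDerivAt_const y a).add ((hf y).hasDerivAt.mul_const _)).sub
      ((hg y).hasDerivAt.mul_const _)
  have h4 := (hB.mul_const (Real.cos x)).deriv
  have h5 := (hB.mul_const (Real.sin x)).deriv
  have h6 := (((hf y).hasDerivAt.mul_const (Real.sin (b * x))).add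
      ((hg y).hasDerivAt.mul_const (Real.cos (b * x)))).deriv
  simp only [Pi.mul_def, Pi.add_def] at h1 h2 h3 h6
  rw [h1, h2, h3, h4, h5, h6]
  have hy := h y
  have hx := Real.sin_sq_add_cos_sq x
  linear_combination (b * (Real.sin (b * x) ^ 2 + Real.cos (b * x) ^ 2)) * hy +
    ((deriv f y * Real.cos (b * x) - deriv g y * Real.sin (b * x)) *
      (-(b * (f y * Real.sin (b * x) + g y * Real.cos (b * x))))) * hx
end
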